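/- arXiv:2402.01547 — 5 statements merged into one kernel-verified Lean document; each statement's English description precedes it below -/
import Mathlib

section
/- Let V_i, V_j, δ_i, δ_j, θ be real numbers with X > 0. Define the complex phasors Ṽ_i = V_i·e^{iδ_i}, Ṽ_j = V_j·e^{iδ_j}, the line impedance Z = X·e^{iθ}, and the complex power S = Ṽ_i · conj((Ṽ_i − Ṽ_j)/Z). Then Re(S) = (V_i²/X)·cos(θ) − (V_i·V_j/X)·cos(θ + δ_i − δ_j) and Im(S) = (V_i²/X)·sin(θ) − (V_i·V_j/X)·sin(θ + δ_i − δ_j). -/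
/-- AC power flow on a line: with phasors `Ṽ_i = V_i e^{iδ_i}`, `Ṽ_j = V_j e^{iδ_j}`,
impedance `Z = X e^{iθ}` and complex power `S = Ṽ_i · conj((Ṽ_i − Ṽ_j)/Z)`, the real and
reactive powers are `Re S = (V_i²/X)cos θ − (V_i V_j/X)cos(θ + δ_i − δ_j)` and
`Im S = (V_i²/X)sin θ − (V_i V_j/X)sin(θ + δ_i − δ_j)`. -/
theorem stmt5 (Vi Vj δi δj θ X : ℝ) (hX : 0 < X)
    (Vip Vjp Z S : ℂ)
    (hVip : Vip = (Vi : ℂ) * Complex.exp ((δi : ℂ) * Complex.I))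
    (hVjp : Vjp = (Vj : ℂ) * Complex.exp ((δj : ℂ) * Complex.I))
    (hZ : Z = (X : ℂ) * Complex.exp ((θ : ℂ) * Complex.I))
    (hS : S = Vip * (starRingEnd ℂ) ((Vip - Vjp) / Z)) :
    S.re = Vi ^ 2 / X * Real.cos θ - Vi * Vj / X * Real.cos (θ + δi - δj) ∧
      S.im = Vi ^ 2 / X * Real.sin θ - Vi * Vj / X * Real.sin (θ + δi - δj) := by
  have hXne : (X : ℂ) ≠ 0 := by exact_mod_cast hX.ne'
  have key : S = ((Vi ^ 2 / X : ℝ) : ℂ) * Complex.exp ((θ : ℂ) * Complex.I)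
      - ((Vi * Vj / X : ℝ) : ℂ) * Complex.exp (((θ + δi - δj : ℝ) : ℂ) * Complex.I) := by
    subst hVip hVjp hZ hS
    rw [map_div₀]
    simp only [map_mul, map_sub, Complex.conj_ofReal, ← Complex.exp_conj, map_mul,
      Complex.conj_ofReal, Complex.conj_I]
    have h1 : ((θ + δi - δj : ℝ) : ℂ) * Complex.I
        = (θ : ℂ) * Complex.I + (δi : ℂ) * Complex.I - (δj : ℂ) * Complex.I := by push_cast; ring
    rw [h1, Complex.exp_sub, Complex.exp_add]
    simp only [mul_neg, Complex.exp_neg]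
    have e1 := Complex.exp_ne_zero ((δi : ℂ) * Complex.I)
    have e2 := Complex.exp_ne_zero ((δj : ℂ) * Complex.I)
    have e3 := Complex.exp_ne_zero ((θ : ℂ) * Complex.I)
    push_cast
    field_simp
  refine ⟨?_, ?_⟩ <;>
  · rw [key]
    simp only [Complex.sub_re, Complex.sub_im, Complex.mul_re, Complex.mul_im,
      Complex.ofReal_re, Complex.ofReal_im, Complex.exp_ofReal_mul_I_re,
      Complex.exp_ofReal_mul_I_im]
    ring
end

section
/- Let n ≥ 1 and m ≥ 1, let A be an n×n real matrix and C an m×n real matrix, and suppose the pair (C,A) is observable, i.e., N(C,A) = {x ∈ ℝⁿ : C·A^k·x = 0 for all 0 ≤ k ≤ n−1} = {0}. Then for every τ > 0, the observability Gramian Γ(τ) = ∫₀^τ (exp(tA))ᵀ · Cᵀ · C · exp(tA) dt is a positive definite (in particular invertible) symmetric n×n matrix. -/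
/-!
For `x : ℝⁿ`, `xᵀ Γ(τ) x = ∫₀^τ |C exp(tA) x|² dt`, so `Γ(τ)` is symmetric positive
semidefinite, and if this integral vanishes then so does the continuous integrand on `(0, τ)`.
Since `d/dt C Aᵏ exp(tA) x = C Aᵏ⁺¹ exp(tA) x`, all the functions `t ↦ C Aᵏ exp(tA) x` then
vanish on `(0, τ)`; observability applied to `exp(tA) x` gives `exp(tA) x = 0`, hence `x = 0`.
-/

open Matrix MeasureTheory Set

variable {ι κ : Type*} [Fintype ι] [Fintype κ]

theorem eqOn_zero_of_intervalIntegral_eq_zero {f : ℝ → ℝ} {a b : ℝ} (hf : Continuous f)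
    (hf₀ : 0 ≤ f) (hab : a ≤ b) (h : ∫ t in a..b, f t = 0) : EqOn f 0 (Ioo a b) := by
  rw [intervalIntegral.integral_eq_zero_iff_of_le_of_nonneg_ae hab
    (Filter.Eventually.of_forall hf₀) (hf.intervalIntegrable a b)] at h
  exact Measure.eqOn_open_of_ae_eq (ae_restrict_of_ae_restrict_of_subset Ioo_subset_Ioc_self h)
    isOpen_Ioo hf.continuousOn continuousOn_const

theorem dotProduct_mulVec_intervalIntegral (M : ℝ → Matrix κ ι ℝ) (x : κ → ℝ) (y : ι → ℝ)
    {a b : ℝ} (hM : ∀ i j, IntervalIntegrable (fun t => M t i j) volume a b) :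
    x ⬝ᵥ (of (fun i j => ∫ t in a..b, M t i j) *ᵥ y) = ∫ t in a..b, x ⬝ᵥ (M t *ᵥ y) := by
  have hterm : ∀ i j, IntervalIntegrable (fun t => x i * (M t i j * y j)) volume a b :=
    fun i j => ((hM i j).mul_const (y j)).const_mul (x i)
  simp only [dotProduct, mulVec, of_apply, Finset.mul_sum]
  rw [intervalIntegral.integral_finsetSum fun i _ => by
    simpa only [Finset.sum_fn] using IntervalIntegrable.sum _ fun j _ => hterm i j]
  refine Finset.sum_congr rfl fun i _ => ?_
  rw [intervalIntegral.integral_finsetSum fun j _ => hterm i j]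
  simp only [intervalIntegral.integral_const_mul, intervalIntegral.integral_mul_const]

theorem dotProduct_transpose_mul_mulVec {R : Type*} [CommSemiring R] (N : Matrix κ ι R)
    (x : ι → R) : x ⬝ᵥ ((Nᵀ * N) *ᵥ x) = (N *ᵥ x) ⬝ᵥ (N *ᵥ x) := by
  rw [← mulVec_mulVec, dotProduct_mulVec, vecMul_transpose]

theorem transpose_mul_transpose_mul_mul {R : Type*} [CommSemiring R] (C : Matrix κ ι R)
    (E : Matrix ι ι R) : Eᵀ * Cᵀ * C * E = (C * E)ᵀ * (C * E) := by
  simp only [transpose_mul, Matrix.mul_assoc]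

variable [DecidableEq ι]

section MatrixExp

open scoped Norms.Operator

theorem continuous_exp_smul (A : Matrix ι ι ℝ) :
    Continuous fun t : ℝ => NormedSpace.exp (t • A) :=
  NormedSpace.exp_continuous.comp (continuous_id.smul continuous_const)

theorem hasDerivAt_mul_exp_smul_mulVec (A : Matrix ι ι ℝ) (B : Matrix κ ι ℝ) (x : ι → ℝ)
    (t : ℝ) :
    HasDerivAt (fun u : ℝ => (B * NormedSpace.exp (u • A)) *ᵥ x)
      ((B * A * NormedSpace.exp (t • A)) *ᵥ x) t := by
  let L : Matrix ι ι ℝ →L[ℝ] κ → ℝ := LinearMap.toContinuousLinearMap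
    { toFun := fun M => (B * M) *ᵥ x
      map_add' := fun M N => by simp [Matrix.mul_add, Matrix.add_mulVec]
      map_smul' := fun c M => by simp [Matrix.mul_smul, Matrix.smul_mulVec] }
  have hcomm : A * NormedSpace.exp (t • A) = NormedSpace.exp (t • A) * A :=
    ((Commute.refl A).smul_right t).exp_right.eq
  refine (L.hasFDerivAt.comp_hasDerivAt t (hasDerivAt_exp_smul_const A t)).congr_deriv ?_
  change (B * (NormedSpace.exp (t • A) * A)) *ᵥ x = _
  rw [← hcomm, Matrix.mul_assoc]

end MatrixExp

section Gramian

noncomputable def observabilityGramian (A : Matrix ι ι ℝ) (C : Matrix κ ι ℝ) (τ : ℝ) :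
    Matrix ι ι ℝ :=
  of fun i j => ∫ t in (0 : ℝ)..τ,
    ((NormedSpace.exp (t • A))ᵀ * Cᵀ * C * NormedSpace.exp (t • A)) i j

variable (A : Matrix ι ι ℝ) (C : Matrix κ ι ℝ)

theorem mul_pow_mul_exp_smul_mulVec_eq_zero {x : ι → ℝ} {U : Set ℝ} (hU : IsOpen U)
    (h : ∀ t ∈ U, (C * NormedSpace.exp (t • A)) *ᵥ x = 0) (k : ℕ) :
    ∀ t ∈ U, (C * A ^ k * NormedSpace.exp (t • A)) *ᵥ x = 0 := by
  induction k with
  | zero => simpa using h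
  | succ k ih =>
    intro t ht
    have hlocal : (fun u => (C * A ^ k * NormedSpace.exp (u • A)) *ᵥ x) =ᶠ[nhds t] fun _ => 0 :=
      Filter.eventually_of_mem (hU.mem_nhds ht) ih
    rw [pow_succ, ← Matrix.mul_assoc]
    exact (hasDerivAt_mul_exp_smul_mulVec A (C * A ^ k) x t).unique
      ((hasDerivAt_const t 0).congr_of_eventuallyEq hlocal)

theorem isHermitian_observabilityGramian (τ : ℝ) : (observabilityGramian A C τ).IsHermitian := by
  ext i j
  simp only [conjTranspose_apply, star_trivial, observabilityGramian, of_apply,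
    transpose_mul_transpose_mul_mul]
  refine intervalIntegral.integral_congr fun t _ => ?_
  set N := C * NormedSpace.exp (t • A)
  simp only [← transpose_apply (Nᵀ * N) i j, transpose_mul, transpose_transpose]

theorem dotProduct_observabilityGramian_mulVec (τ : ℝ) (x : ι → ℝ) :
    x ⬝ᵥ (observabilityGramian A C τ *ᵥ x) =
      ∫ t in (0 : ℝ)..τ,
        ((C * NormedSpace.exp (t • A)) *ᵥ x) ⬝ᵥ ((C * NormedSpace.exp (t • A)) *ᵥ x) := by
  have hcont : Continuous fun t : ℝ =>
      (NormedSpace.exp (t • A))ᵀ * Cᵀ * C * NormedSpace.exp (t • A) :=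
    (((continuous_exp_smul A).matrix_transpose.matrix_mul continuous_const).matrix_mul
      continuous_const).matrix_mul (continuous_exp_smul A)
  rw [observabilityGramian, dotProduct_mulVec_intervalIntegral _ _ _ fun i j =>
    (hcont.matrix_elem i j).intervalIntegrable 0 τ]
  simp only [transpose_mul_transpose_mul_mul, dotProduct_transpose_mul_mulVec]

theorem posDef_observabilityGramian
    (hobs : ∀ x : ι → ℝ, (∀ k : ℕ, (C * A ^ k) *ᵥ x = 0) → x = 0) {τ : ℝ} (hτ : 0 < τ) :
    (observabilityGramian A C τ).PosDef := by
  refine .of_dotProduct_mulVec_pos (isHermitian_observabilityGramian A C τ) fun x hx => ?_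
  set y : ℝ → κ → ℝ := fun t => (C * NormedSpace.exp (t • A)) *ᵥ x
  have hy : Continuous y := (continuous_const.matrix_mul (continuous_exp_smul A)).matrix_mulVec
    continuous_const
  have hnonneg : 0 ≤ fun t => y t ⬝ᵥ y t := fun t =>
    Finset.sum_nonneg fun i _ => mul_self_nonneg (y t i)
  rw [star_trivial, dotProduct_observabilityGramian_mulVec]
  refine (intervalIntegral.integral_nonneg hτ.le fun t _ => hnonneg t).lt_of_ne' fun h0 => hx ?_
  have hvanish : ∀ t ∈ Ioo 0 τ, y t = 0 := fun t ht => dotProduct_self_eq_zero.mp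
    (eqOn_zero_of_intervalIntegral_eq_zero (hy.dotProduct hy) hnonneg hτ.le h0 ht)
  have hmid : τ / 2 ∈ Ioo 0 τ := ⟨half_pos hτ, half_lt_self hτ⟩
  have hexp_x : NormedSpace.exp ((τ / 2) • A) *ᵥ x = 0 := hobs _ fun k => by
    rw [mulVec_mulVec]
    exact mul_pow_mul_exp_smul_mulVec_eq_zero A C isOpen_Ioo hvanish k _ hmid
  have hexp_unit : IsUnit (NormedSpace.exp ((τ / 2) • A)) := Matrix.isUnit_exp _
  exact mulVec_injective_iff_isUnit.mpr hexp_unit (hexp_x.trans (mulVec_zero _).symm)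

end Gramian

theorem stmt8_general (n m : ℕ)
    (A : Matrix (Fin n) (Fin n) ℝ) (C : Matrix (Fin m) (Fin n) ℝ)
    (hobs : ∀ x : Fin n → ℝ, (∀ k : ℕ, k ≤ n - 1 → (C * A ^ k) *ᵥ x = 0) → x = 0)
    (τ : ℝ) (hτ : 0 < τ)
    (Γ : Matrix (Fin n) (Fin n) ℝ)
    (hΓ : Γ = Matrix.of fun i j => ∫ t in (0 : ℝ)..τ,
      ((NormedSpace.exp (t • A))ᵀ * Cᵀ * C * NormedSpace.exp (t • A)) i j) :
    Γ.PosDef ∧ IsUnit Γ.det := by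
  have hPD : Γ.PosDef := hΓ ▸ posDef_observabilityGramian A C
    (fun x hx => hobs x fun k _ => hx k) hτ
  exact ⟨hPD, (isUnit_iff_isUnit_det Γ).mp hPD.isUnit⟩

/-- For an observable pair `(C, A)` and any `τ > 0`, the observability Gramian
`Γ(τ) = ∫₀^τ exp(tA)ᵀ Cᵀ C exp(tA) dt` (computed entrywise) is positive definite,
in particular its determinant is a unit (it is invertible); positive definiteness
includes symmetry (Hermitian over ℝ). -/
theorem stmt8 (n m : ℕ) (hn : 1 ≤ n) (hm : 1 ≤ m)
    (A : Matrix (Fin n) (Fin n) ℝ) (C : Matrix (Fin m) (Fin n) ℝ)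
    (hobs : ∀ x : Fin n → ℝ, (∀ k : ℕ, k ≤ n - 1 → (C * A ^ k) *ᵥ x = 0) → x = 0)
    (τ : ℝ) (hτ : 0 < τ)
    (Γ : Matrix (Fin n) (Fin n) ℝ)
    (hΓ : Γ = Matrix.of fun i j => ∫ t in (0 : ℝ)..τ,
      ((NormedSpace.exp (t • A))ᵀ * Cᵀ * C * NormedSpace.exp (t • A)) i j) :
    Γ.PosDef ∧ IsUnit Γ.det :=
  stmt8_general n m A C hobs τ hτ Γ hΓ
end

section
/- Let n₁, n₂ ≥ 1, let A₁ be an n₁×n₁ complex matrix, A₂ an n₂×n₂ complex matrix, b₁, c₁ ∈ ℂ^{n₁}, b₂, c₂ ∈ ℂ^{n₂}, and let λ ∈ ℂ be such that λ·I − A₁ and λ·I − A₂ are both invertible (λ is not an eigenvalue of A₁ or A₂). Suppose c₁ᵀ·(λI − A₁)⁻¹·b₁ ≠ c₂ᵀ·(λI − A₂)⁻¹·b₂. Then for every τ > 0 and all initial states x₁ ∈ ℂ^{n₁}, x₂ ∈ ℂ^{n₂}, the total outputs y₁(t) = c₁ᵀ·exp(tA₁)·x₁ + ∫₀ᵗ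 c₁ᵀ·exp((t−s)A₁)·b₁·e^{λs} ds and y₂(t) = c₂ᵀ·exp(tA₂)·x₂ + ∫₀ᵗ c₂ᵀ·exp((t−s)A₂)·b₂·e^{λs} ds do not coincide for all t ∈ [0, τ); i.e., there exists t ∈ [0, τ) with y₁(t) ≠ y₂(t). -/
/-!
Solving the convolution integral, the output of subsystem `i` is
`yᵢ(t) = cᵢᵀ e^{tAᵢ} (xᵢ - wᵢ) + Gᵢ(λ) e^{λt}` with `wᵢ = (λI - Aᵢ)⁻¹ bᵢ`.
If `y₁ = y₂` on `[0, τ)`, differentiating `k` times inside the interval replaces `xᵢ - wᵢ` by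
`Aᵢᵏ (xᵢ - wᵢ)` and multiplies the exponential term by `λᵏ`. The combination of these identities
given by `p = χ_{A₁} χ_{A₂}` kills both free responses (Cayley–Hamilton) and leaves
`(G₁(λ) - G₂(λ)) p(λ) e^{λt} = 0`, where `p(λ) ≠ 0` because `λ` is not an eigenvalue.
-/

open Matrix

open NormedSpace Polynomial Set Filter Topology

theorem eqOn_zero_of_hasDerivAt_succ {𝕜 F : Type*} [NontriviallyNormedField 𝕜]
    [NormedAddCommGroup F] [NormedSpace 𝕜 F] {U : Set 𝕜} (hU : IsOpen U) {f : ℕ → 𝕜 → F}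
    (hf : ∀ k, ∀ t ∈ U, HasDerivAt (f k) (f (k + 1) t) t) (h₀ : EqOn (f 0) 0 U) (k : ℕ) :
    EqOn (f k) 0 U := by
  induction k with
  | zero => exact h₀
  | succ k ih =>
    intro t ht
    have hloc : f k =ᶠ[𝓝 t] fun _ => 0 := eventuallyEq_of_mem (hU.mem_nhds ht) ih
    rw [← (hf k t ht).deriv, hloc.deriv_eq, deriv_const, Pi.zero_apply]

theorem hasDerivAt_cexp_mul_ofReal (l : ℂ) (t : ℝ) :
    HasDerivAt (fun s : ℝ => Complex.exp (l * s)) (l * Complex.exp (l * t)) t := by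
  simpa [mul_comm] using ((hasDerivAt_id t).ofReal_comp.const_mul l).cexp

theorem Matrix.eval_charpoly_ne_zero_of_isUnit {ι R : Type*} [Fintype ι] [DecidableEq ι]
    [CommRing R] [Nontrivial R] {A : Matrix ι ι R} {l : R} (h : IsUnit (l • 1 - A)) :
    A.charpoly.eval l ≠ 0 := by
  rw [eval_charpoly, scalar_apply, ← smul_one_eq_diagonal]
  exact ((isUnit_iff_isUnit_det _).mp h).ne_zero

section FreeResponse

variable {ι : Type*} [Fintype ι] [DecidableEq ι] (A : Matrix ι ι ℂ) (c : ι → ℂ)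

noncomputable def freeResponse (v : ι → ℂ) (t : ℝ) : ℂ :=
  c ⬝ᵥ (exp ((t : ℂ) • A) *ᵥ v)

theorem freeResponse_add (v w : ι → ℂ) (t : ℝ) :
    freeResponse A c (v + w) t = freeResponse A c v t + freeResponse A c w t := by
  simp only [freeResponse, mulVec_add, dotProduct_add]

theorem freeResponse_sub (v w : ι → ℂ) (t : ℝ) :
    freeResponse A c (v - w) t = freeResponse A c v t - freeResponse A c w t := by
  simp only [freeResponse, mulVec_sub, dotProduct_sub]

theorem freeResponse_smul (a : ℂ) (v : ι → ℂ) (t : ℝ) :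
    freeResponse A c (a • v) t = a * freeResponse A c v t := by
  simp only [freeResponse, mulVec_smul, dotProduct_smul, smul_eq_mul]

section Derivative

attribute [local instance] Matrix.linftyOpNormedAddCommGroup Matrix.linftyOpNormedRing
  Matrix.linftyOpNormedAlgebra

theorem hasDerivAt_freeResponse (v : ι → ℂ) (t : ℝ) :
    HasDerivAt (freeResponse A c v) (freeResponse A c (A *ᵥ v) t) t := by
  let L : Matrix ι ι ℂ →L[ℂ] ℂ := LinearMap.toContinuousLinearMap
    { toFun := fun M => c ⬝ᵥ (M *ᵥ v)
      map_add' := fun M N => by simp only [add_mulVec, dotProduct_add]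
      map_smul' := fun a M => by simp only [smul_mulVec, dotProduct_smul, RingHom.id_apply] }
  have hexp : HasDerivAt (fun z : ℂ => L (exp (z • A))) (L (A * exp ((t : ℂ) • A))) t :=
    L.hasFDerivAt.comp_hasDerivAt _ (hasDerivAt_exp_smul_const' A (t : ℂ))
  have hcomm : A * exp ((t : ℂ) • A) = exp ((t : ℂ) • A) * A :=
    ((Commute.refl A).smul_right _).exp_right
  refine hexp.comp_ofReal.congr_deriv ?_
  change c ⬝ᵥ ((A * exp ((t : ℂ) • A)) *ᵥ v) = c ⬝ᵥ (exp ((t : ℂ) • A) *ᵥ (A *ᵥ v))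
  rw [hcomm, ← mulVec_mulVec]

end Derivative

theorem continuous_freeResponse (v : ι → ℂ) : Continuous (freeResponse A c v) :=
  continuous_iff_continuousAt.2 fun t => (hasDerivAt_freeResponse A c v t).continuousAt

theorem integral_freeResponse_mul_cexp (b : ι → ℂ) {l : ℂ} (hl : IsUnit (l • 1 - A)) (t : ℝ) :
    ∫ s in (0 : ℝ)..t, freeResponse A c b (t - s) * Complex.exp (l * s) =
      c ⬝ᵥ ((l • 1 - A)⁻¹ *ᵥ b) * Complex.exp (l * t)
        - freeResponse A c ((l • 1 - A)⁻¹ *ᵥ b) t := by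
  set w := (l • 1 - A)⁻¹ *ᵥ b
  have hw : l • w - A *ᵥ w = b := by
    have hb : (l • 1 - A) *ᵥ w = b := by
      rw [mulVec_mulVec, mul_nonsing_inv _ ((isUnit_iff_isUnit_det _).mp hl), one_mulVec]
    rwa [sub_mulVec, smul_mulVec, one_mulVec] at hb
  have hderiv : ∀ s : ℝ, HasDerivAt (fun s => freeResponse A c w (t - s) * Complex.exp (l * s))
      (freeResponse A c b (t - s) * Complex.exp (l * s)) s := by
    intro s
    have h := ((hasDerivAt_freeResponse A c w (t - s)).scomp s
      ((hasDerivAt_id s).const_sub t)).mul (hasDerivAt_cexp_mul_ofReal l s)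
    refine h.congr_deriv ?_
    rw [← hw, freeResponse_sub, freeResponse_smul]
    simp only [Function.comp_apply, neg_one_smul]
    ring
  have hint : IntervalIntegrable (fun s => freeResponse A c b (t - s) * Complex.exp (l * s))
      MeasureTheory.volume 0 t :=
    (((continuous_freeResponse A c b).comp (continuous_sub_left t)).mul
      (by fun_prop)).intervalIntegrable _ _
  rw [intervalIntegral.integral_eq_sub_of_hasDerivAt (fun s _ => hderiv s) hint]
  simp [freeResponse]

theorem freeResponse_aeval_mulVec_monomial (k : ℕ) (a : ℂ) (v : ι → ℂ) (t : ℝ) :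
    freeResponse A c (aeval A (monomial k a) *ᵥ v) t = a * freeResponse A c (A ^ k *ᵥ v) t := by
  rw [aeval_monomial, Algebra.algebraMap_eq_smul_one, smul_mul_assoc, one_mul, smul_mulVec,
    freeResponse_smul]

end FreeResponse

section Separation

variable {ι κ : Type*} [Fintype ι] [DecidableEq ι] [Fintype κ] [DecidableEq κ]
  (A₁ : Matrix ι ι ℂ) (A₂ : Matrix κ κ ℂ) (c₁ v₁ : ι → ℂ) (c₂ v₂ : κ → ℂ) (l γ : ℂ)

theorem freeResponse_add_mul_cexp_sub_freeResponse_aeval_eq_zero {U : Set ℝ} (hU : IsOpen U)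
    (h : ∀ t ∈ U, freeResponse A₁ c₁ v₁ t + γ * Complex.exp (l * t) = freeResponse A₂ c₂ v₂ t)
    (p : ℂ[X]) {t : ℝ} (ht : t ∈ U) :
    freeResponse A₁ c₁ (aeval A₁ p *ᵥ v₁) t + γ * p.eval l * Complex.exp (l * t)
      - freeResponse A₂ c₂ (aeval A₂ p *ᵥ v₂) t = 0 := by
  set F : ℕ → ℝ → ℂ := fun k t => freeResponse A₁ c₁ (A₁ ^ k *ᵥ v₁) t
    + γ * l ^ k * Complex.exp (l * t) - freeResponse A₂ c₂ (A₂ ^ k *ᵥ v₂) t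
  have hF : ∀ k, ∀ t ∈ U, HasDerivAt (F k) (F (k + 1) t) t := fun k t _ => by
    refine (((hasDerivAt_freeResponse A₁ c₁ _ t).add
      ((hasDerivAt_cexp_mul_ofReal l t).const_mul (γ * l ^ k))).sub
      (hasDerivAt_freeResponse A₂ c₂ _ t)).congr_deriv ?_
    simp only [F, pow_succ', ← mulVec_mulVec]
    ring
  have hF₀ : EqOn (F 0) 0 U := fun t ht => by
    simp only [F, pow_zero, one_mulVec, mul_one, h t ht, Pi.zero_apply, sub_self]
  induction p using Polynomial.induction_on' with
  | add p q hp hq =>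
    simp only [map_add, add_mulVec, freeResponse_add, eval_add]
    linear_combination hp + hq
  | monomial k a =>
    simp only [freeResponse_aeval_mulVec_monomial, eval_monomial]
    have hk : F k t = 0 := eqOn_zero_of_hasDerivAt_succ hU hF hF₀ k ht
    linear_combination a * hk

theorem eq_zero_of_freeResponse_add_mul_cexp_eqOn (h₁ : IsUnit (l • 1 - A₁))
    (h₂ : IsUnit (l • 1 - A₂)) {U : Set ℝ} (hU : IsOpen U) (hne : U.Nonempty)
    (h : ∀ t ∈ U, freeResponse A₁ c₁ v₁ t + γ * Complex.exp (l * t) = freeResponse A₂ c₂ v₂ t) :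
    γ = 0 := by
  obtain ⟨t, ht⟩ := hne
  have := freeResponse_add_mul_cexp_sub_freeResponse_aeval_eq_zero A₁ A₂ c₁ v₁ c₂ v₂ l γ hU h
    (A₁.charpoly * A₂.charpoly) ht
  simp only [map_mul, aeval_self_charpoly, zero_mul, mul_zero, zero_mulVec, eval_mul] at this
  simpa [freeResponse, eval_charpoly_ne_zero_of_isUnit h₁, eval_charpoly_ne_zero_of_isUnit h₂,
    Complex.exp_ne_zero] using this

end Separation

theorem stmt10_general (n₁ n₂ : ℕ)
    (A₁ : Matrix (Fin n₁) (Fin n₁) ℂ) (A₂ : Matrix (Fin n₂) (Fin n₂) ℂ)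
    (b₁ c₁ : Fin n₁ → ℂ) (b₂ c₂ : Fin n₂ → ℂ) (l : ℂ)
    (h₁ : IsUnit (l • (1 : Matrix (Fin n₁) (Fin n₁) ℂ) - A₁))
    (h₂ : IsUnit (l • (1 : Matrix (Fin n₂) (Fin n₂) ℂ) - A₂))
    (hG : c₁ ⬝ᵥ ((l • (1 : Matrix (Fin n₁) (Fin n₁) ℂ) - A₁)⁻¹ *ᵥ b₁)
        ≠ c₂ ⬝ᵥ ((l • (1 : Matrix (Fin n₂) (Fin n₂) ℂ) - A₂)⁻¹ *ᵥ b₂)) :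
    ∀ τ : ℝ, 0 < τ → ∀ x₁ : Fin n₁ → ℂ, ∀ x₂ : Fin n₂ → ℂ,
      ∃ t ∈ Set.Ico (0 : ℝ) τ,
        c₁ ⬝ᵥ (NormedSpace.exp ((t : ℂ) • A₁) *ᵥ x₁)
            + ∫ s in (0 : ℝ)..t,
                (c₁ ⬝ᵥ (NormedSpace.exp (((t - s : ℝ) : ℂ) • A₁) *ᵥ b₁)) * Complex.exp (l * s)
          ≠ c₂ ⬝ᵥ (NormedSpace.exp ((t : ℂ) • A₂) *ᵥ x₂)
            + ∫ s in (0 : ℝ)..t,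
                (c₂ ⬝ᵥ (NormedSpace.exp (((t - s : ℝ) : ℂ) • A₂) *ᵥ b₂)) * Complex.exp (l * s) := by
  intro τ hτ x₁ x₂
  by_contra! hy
  set w₁ := (l • (1 : Matrix (Fin n₁) (Fin n₁) ℂ) - A₁)⁻¹ *ᵥ b₁
  set w₂ := (l • (1 : Matrix (Fin n₂) (Fin n₂) ℂ) - A₂)⁻¹ *ᵥ b₂
  refine hG <| sub_eq_zero.mp <| eq_zero_of_freeResponse_add_mul_cexp_eqOn A₁ A₂
    c₁ (x₁ - w₁) c₂ (x₂ - w₂) l _ h₁ h₂ isOpen_Ioo (nonempty_Ioo.mpr hτ) fun t ht => ?_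
  have hyt : freeResponse A₁ c₁ x₁ t
        + ∫ s in (0 : ℝ)..t, freeResponse A₁ c₁ b₁ (t - s) * Complex.exp (l * s)
      = freeResponse A₂ c₂ x₂ t
        + ∫ s in (0 : ℝ)..t, freeResponse A₂ c₂ b₂ (t - s) * Complex.exp (l * s) :=
    hy t (Ioo_subset_Ico_self ht)
  rw [integral_freeResponse_mul_cexp A₁ c₁ b₁ h₁, integral_freeResponse_mul_cexp A₂ c₂ b₂ h₂]
    at hyt
  rw [freeResponse_sub, freeResponse_sub]
  linear_combination hyt

/-- Single-simple-pole case of the input-design theorem: if `λ` is not an eigenvalue of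
`A₁` or `A₂` and the transfer functions differ at `λ`, i.e.
`c₁ᵀ(λI−A₁)⁻¹b₁ ≠ c₂ᵀ(λI−A₂)⁻¹b₂`, then for any `τ > 0` and any initial states the total
outputs (initial-state response plus input response to `u(t) = e^{λt}`) of the two
subsystems differ at some `t ∈ [0, τ)`. -/
theorem stmt10 (n₁ n₂ : ℕ) (hn₁ : 1 ≤ n₁) (hn₂ : 1 ≤ n₂)
    (A₁ : Matrix (Fin n₁) (Fin n₁) ℂ) (A₂ : Matrix (Fin n₂) (Fin n₂) ℂ)
    (b₁ c₁ : Fin n₁ → ℂ) (b₂ c₂ : Fin n₂ → ℂ) (l : ℂ)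
    (h₁ : IsUnit (l • (1 : Matrix (Fin n₁) (Fin n₁) ℂ) - A₁))
    (h₂ : IsUnit (l • (1 : Matrix (Fin n₂) (Fin n₂) ℂ) - A₂))
    (hG : c₁ ⬝ᵥ ((l • (1 : Matrix (Fin n₁) (Fin n₁) ℂ) - A₁)⁻¹ *ᵥ b₁)
        ≠ c₂ ⬝ᵥ ((l • (1 : Matrix (Fin n₂) (Fin n₂) ℂ) - A₂)⁻¹ *ᵥ b₂)) :
    ∀ τ : ℝ, 0 < τ → ∀ x₁ : Fin n₁ → ℂ, ∀ x₂ : Fin n₂ → ℂ,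
      ∃ t ∈ Set.Ico (0 : ℝ) τ,
        c₁ ⬝ᵥ (NormedSpace.exp ((t : ℂ) • A₁) *ᵥ x₁)
            + ∫ s in (0 : ℝ)..t,
                (c₁ ⬝ᵥ (NormedSpace.exp (((t - s : ℝ) : ℂ) • A₁) *ᵥ b₁)) * Complex.exp (l * s)
          ≠ c₂ ⬝ᵥ (NormedSpace.exp ((t : ℂ) • A₂) *ᵥ x₂)
            + ∫ s in (0 : ℝ)..t,
                (c₂ ⬝ᵥ (NormedSpace.exp (((t - s : ℝ) : ℂ) • A₂) *ᵥ b₂)) * Complex.exp (l * s) :=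
  stmt10_general n₁ n₂ A₁ A₂ b₁ c₁ b₂ c₂ l h₁ h₂ hG
end

section
/- Let A₁ = [[−4, 0], [0, −5]], A₂ = [[−4, 0], [0, −10]] be 2×2 real matrices, b = (1, 1), c₁ = (1, 1), c₂ = (1, 2) ∈ ℝ². Then there exist initial states x₁, x₂ ∈ ℝ² such that for all t ≥ 0, c₁ · (exp(tA₁)·x₁ + ∫₀ᵗ exp(sA₁)·b ds) = c₂ · (exp(tA₂)·x₂ + ∫₀ᵗ exp(sA₂)·b ds). -/
/-!
Under the unit step input, a point `x` with `A x + b = 0` is an equilibrium, so started there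
the state stays at `x = -A⁻¹ b` and the output is the constant `-c A⁻¹ b`, the DC gain `G(0)` of
the transfer function. Here `x₁ = (1/4, 1/5)` and `x₂ = (1/4, 1/10)`, and both DC gains equal
`9/20`: the two transfer functions agree at the input's pole `0`.
-/

open Matrix

section StepResponse

variable {n : Type*} [Fintype n] [DecidableEq n]

theorem hasDerivAt_exp_smul_mulVec (A : Matrix n n ℝ) (x : n → ℝ) (s : ℝ) :
    HasDerivAt (fun s : ℝ => NormedSpace.exp (s • A) *ᵥ x)
      (NormedSpace.exp (s • A) *ᵥ (A *ᵥ x)) s := by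
  rw [mulVec_mulVec]
  open scoped Norms.Operator in
  exact (LinearMap.toContinuousLinearMap ((mulVecBilin ℝ ℝ).flip x)).hasFDerivAt.comp_hasDerivAt s
    (hasDerivAt_exp_smul_const A s)

theorem continuous_exp_smul_mulVec (A : Matrix n n ℝ) (x : n → ℝ) :
    Continuous fun s : ℝ => NormedSpace.exp (s • A) *ᵥ x :=
  continuous_iff_continuousAt.2 fun s =>
    (hasDerivAt_exp_smul_mulVec A x s).continuousAt

theorem integral_exp_smul_mulVec_mulVec (A : Matrix n n ℝ) (x : n → ℝ) (t : ℝ) :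
    ∫ s in (0 : ℝ)..t, NormedSpace.exp (s • A) *ᵥ (A *ᵥ x) = NormedSpace.exp (t • A) *ᵥ x - x := by
  rw [intervalIntegral.integral_eq_sub_of_hasDerivAt (fun s _ => hasDerivAt_exp_smul_mulVec A x s)
    ((continuous_exp_smul_mulVec A _).intervalIntegrable _ _), zero_smul, NormedSpace.exp_zero,
    one_mulVec]

theorem exp_smul_mulVec_add_integral_of_mulVec_add_eq_zero {A : Matrix n n ℝ} {x b : n → ℝ}
    (hx : A *ᵥ x + b = 0) (t : ℝ) :
    NormedSpace.exp (t • A) *ᵥ x + ∫ s in (0 : ℝ)..t, NormedSpace.exp (s • A) *ᵥ b = x := by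
  rw [eq_neg_of_add_eq_zero_right hx]
  simp only [mulVec_neg, intervalIntegral.integral_neg, integral_exp_smul_mulVec_mulVec]
  abel

end StepResponse

/-- Example 3: for the two subsystems with `A₁ = diag(−4,−5)`, `A₂ = diag(−4,−10)`,
`b = (1,1)`, `c₁ = (1,1)`, `c₂ = (1,2)` driven by the unit step input, there exist
initial states making the two total outputs coincide for all `t ≥ 0`, so the active
subsystem cannot be determined from the output data. -/
theorem stmt12 :
    ∃ x₁ x₂ : Fin 2 → ℝ, ∀ t : ℝ, 0 ≤ t →
      (![1, 1] : Fin 2 → ℝ) ⬝ᵥ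
          (NormedSpace.exp (t • (!![-4, 0; 0, -5] : Matrix (Fin 2) (Fin 2) ℝ)) *ᵥ x₁
            + ∫ s in (0 : ℝ)..t,
                NormedSpace.exp (s • (!![-4, 0; 0, -5] : Matrix (Fin 2) (Fin 2) ℝ)) *ᵥ ![1, 1])
        = (![1, 2] : Fin 2 → ℝ) ⬝ᵥ
            (NormedSpace.exp (t • (!![-4, 0; 0, -10] : Matrix (Fin 2) (Fin 2) ℝ)) *ᵥ x₂
              + ∫ s in (0 : ℝ)..t,
                  NormedSpace.exp (s • (!![-4, 0; 0, -10] : Matrix (Fin 2) (Fin 2) ℝ)) *ᵥ ![1, 1]) := by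
  have h₁ : (!![-4, 0; 0, -5] : Matrix (Fin 2) (Fin 2) ℝ) *ᵥ ![1 / 4, 1 / 5] + ![1, 1] = 0 := by
    ext i; fin_cases i <;> norm_num [mulVec, dotProduct]
  have h₂ : (!![-4, 0; 0, -10] : Matrix (Fin 2) (Fin 2) ℝ) *ᵥ ![1 / 4, 1 / 10] + ![1, 1] = 0 := by
    ext i; fin_cases i <;> norm_num [mulVec, dotProduct]
  refine ⟨![1 / 4, 1 / 5], ![1 / 4, 1 / 10], fun t _ => ?_⟩
  rw [exp_smul_mulVec_add_integral_of_mulVec_add_eq_zero h₁,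
    exp_smul_mulVec_add_integral_of_mulVec_add_eq_zero h₂]
  norm_num [dotProduct]
end

section
/- Let n ≥ 1, let A be an n×n complex matrix, and let a > 0 be such that every eigenvalue μ of A (every μ in the spectrum of A over ℂ) satisfies Re(μ) < −a. Then there exists a constant c > 0 such that for all t ≥ 0, ‖exp(t·A)‖ ≤ c·e^{−a·t}, where ‖·‖ is the operator norm (any fixed matrix norm) and exp is the matrix exponential. -/
open Matrix

attribute [local instance] Matrix.linftyOpNormedAddCommGroup

/-!
The polynomials in `A` form a finite-dimensional, hence closed, subalgebra, so `exp A = p(A)` for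
some polynomial `p`; on an eigenvector of `A` with eigenvalue `z` both sides act as `p(z)` and
`exp z`, so `p = exp` on `σ(A)`, and the polynomial spectral mapping theorem gives
`σ(exp A) = exp(σ(A))`, contained in the open disc of radius `e^{-a}`. Gelfand's formula then
yields `‖(exp A)^k‖ ≤ C e^{-ak}`, and writing `t = k + s` with `s ∈ [0, 1]` and bounding `exp(sA)`
by compactness gives the estimate for all real `t ≥ 0`.
-/

open Polynomial NormedSpace Filter

section BanachAlgebra

variable {𝔸 : Type*} [NormedRing 𝔸] [NormedAlgebra ℂ 𝔸] [CompleteSpace 𝔸]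

theorem exists_norm_pow_le_mul_pow_of_forall_norm_lt {b : 𝔸} {r : ℝ} (hr : 0 < r)
    (h : ∀ z ∈ spectrum ℂ b, ‖z‖ < r) : ∃ C, ∀ k : ℕ, ‖b ^ k‖ ≤ C * r ^ k := by
  rcases subsingleton_or_nontrivial 𝔸 with _ | _
  · exact ⟨0, fun k => by simp [Subsingleton.elim (b ^ k) 0]⟩
  have hρ : spectralRadius ℂ b < ENNReal.ofReal r :=
    spectrum.spectralRadius_lt_of_forall_lt b fun z hz => by
      rw [← NNReal.coe_lt_coe, coe_nnnorm, Real.coe_toNNReal _ hr.le]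
      exact h z hz
  have hroot : ∀ᶠ k : ℕ in atTop, ‖b ^ k‖ ^ (1 / k : ℝ) < r := by
    filter_upwards
      [(spectrum.pow_norm_pow_one_div_tendsto_nhds_spectralRadius b).eventually_lt_const hρ]
      with k hk
    exact (ENNReal.ofReal_lt_ofReal_iff hr).1 hk
  have hbig : (fun k : ℕ => b ^ k) =O[atTop] fun k => r ^ k := by
    refine Asymptotics.IsBigO.of_bound 1 ?_
    filter_upwards [hroot, eventually_gt_atTop 0] with k hk hk0
    rw [one_div, Real.rpow_inv_lt_iff_of_pos (norm_nonneg _) hr.le (by positivity),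
      Real.rpow_natCast] at hk
    rw [one_mul, Real.norm_of_nonneg (by positivity)]
    exact hk.le
  obtain ⟨C, hC⟩ := (Asymptotics.isBigO_nat_atTop_iff fun k hk => absurd hk (by positivity)).1 hbig
  exact ⟨C, fun k => by simpa only [Real.norm_of_nonneg (pow_nonneg hr.le k)] using hC k⟩

theorem exists_norm_exp_smul_le_of_norm_exp_pow_le {x : 𝔸} {a C : ℝ}
    (hC : ∀ k : ℕ, ‖exp x ^ k‖ ≤ C * Real.exp (-a) ^ k) :
    ∃ c, 0 < c ∧ ∀ t : ℝ, 0 ≤ t → ‖exp ((t : ℂ) • x)‖ ≤ c * Real.exp (-a * t) := by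
  let : NormedAlgebra ℚ 𝔸 := .restrictScalars ℚ ℂ 𝔸
  obtain ⟨M, hM⟩ := isCompact_Icc.exists_bound_of_continuousOn
    (exp_continuous.comp (Complex.continuous_ofReal.smul continuous_const)).continuousOn
    (s := Set.Icc (0 : ℝ) 1) (f := fun s : ℝ => exp ((s : ℂ) • x))
  refine ⟨max C 1 * max M 1 * Real.exp |a|, by positivity, fun t ht => ?_⟩
  set k := ⌊t⌋₊
  set s := t - k
  have hs : s ∈ Set.Icc (0 : ℝ) 1 := ⟨sub_nonneg.2 (Nat.floor_le ht), by
    have := Nat.lt_floor_add_one t; simp only [s]; linarith⟩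
  have hsplit : exp ((t : ℂ) • x) = exp x ^ k * exp ((s : ℂ) • x) := by
    rw [← NormedSpace.exp_nsmul, ← Nat.cast_smul_eq_nsmul ℂ,
      ← NormedSpace.exp_add_of_commute ((Commute.refl x).smul_left _ |>.smul_right _), ← add_smul]
    simp [s]
  have hdecay : Real.exp (-a) ^ k ≤ Real.exp |a| * Real.exp (-a * t) := by
    rw [← Real.exp_nat_mul, ← Real.exp_add]
    refine Real.exp_le_exp.2 ?_
    nlinarith [le_abs_self a, neg_abs_le a, hs.1, hs.2]
  calc ‖exp ((t : ℂ) • x)‖ ≤ ‖exp x ^ k‖ * ‖exp ((s : ℂ) • x)‖ := hsplit ▸ norm_mul_le _ _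
    _ ≤ (max C 1 * Real.exp (-a) ^ k) * max M 1 := by
        gcongr
        · exact (hC k).trans (by gcongr; exact le_max_left _ _)
        · exact (hM s hs).trans (le_max_left _ _)
    _ ≤ (max C 1 * (Real.exp |a| * Real.exp (-a * t))) * max M 1 := by gcongr
    _ = max C 1 * max M 1 * Real.exp |a| * Real.exp (-a * t) := by ring

end BanachAlgebra

theorem NormedSpace.exists_aeval_eq_exp {𝕜 𝔸 : Type*} [RCLike 𝕜] [NormedRing 𝔸]
    [NormedAlgebra 𝕜 𝔸] [FiniteDimensional 𝕜 𝔸] (x : 𝔸) : ∃ p : 𝕜[X], aeval x p = exp x := by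
  have : CompleteSpace 𝔸 := FiniteDimensional.complete 𝕜 𝔸
  have hclosed : IsClosed ((aeval (R := 𝕜) x).range : Set 𝔸) :=
    (Subalgebra.toSubmodule (aeval (R := 𝕜) x).range).closed_of_finiteDimensional
  have hx : x ∈ (aeval (R := 𝕜) x).range := ⟨X, aeval_X x⟩
  exact hclosed.mem_of_tendsto (exp_series_hasSum_exp' (𝕂 := 𝕜) x) <| .of_forall fun s =>
    sum_mem fun k _ => Subalgebra.smul_mem _ (Subalgebra.pow_mem _ hx k) _

namespace Matrix

attribute [local instance] Matrix.linftyOpNormedRing Matrix.linftyOpNormedAlgebra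

variable {ι : Type*} [Fintype ι] [DecidableEq ι] {A : Matrix ι ι ℂ} {z : ℂ} {v : ι → ℂ}

theorem aeval_mulVec_of_mulVec_eq_smul (hv : A *ᵥ v = z • v) (p : ℂ[X]) :
    aeval A p *ᵥ v = p.eval z • v := by
  rw [← toLinAlgEquiv'_apply, ← AlgEquiv.coe_toAlgHom, ← aeval_algHom_apply]
  exact Module.End.aeval_apply_of_mem_apply_eq_smul hv

theorem exp_mulVec_of_mulVec_eq_smul (hv : A *ᵥ v = z • v) :
    exp A *ᵥ v = Complex.exp z • v := by
  have hterms (k : ℕ) :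
      ((k.factorial⁻¹ : ℂ) • A ^ k) *ᵥ v = ((k.factorial⁻¹ : ℂ) * z ^ k) • v := by
    simpa [smul_mulVec, smul_smul] using
      congrArg ((k.factorial⁻¹ : ℂ) • ·) (aeval_mulVec_of_mulVec_eq_smul hv (X ^ k))
  have hsum : HasSum (fun k : ℕ => ((k.factorial⁻¹ : ℂ) • A ^ k) *ᵥ v) (exp A *ᵥ v) :=
    (exp_series_hasSum_exp' A).map (mulVec.addMonoidHomLeft v)
      (continuous_id.matrix_mulVec continuous_const)
  refine (funext hterms ▸ hsum).unique ?_
  simpa only [Complex.exp_eq_exp_ℂ, smul_eq_mul] using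
    (exp_series_hasSum_exp' (𝕂 := ℂ) z).smul_const v

theorem spectrum_exp (A : Matrix ι ι ℂ) :
    spectrum ℂ (exp A) = Complex.exp '' spectrum ℂ A := by
  nontriviality Matrix ι ι ℂ
  obtain ⟨p, hp⟩ : ∃ p : ℂ[X], aeval A p = exp A := exists_aeval_eq_exp A
  have heval : ∀ z ∈ spectrum ℂ A, p.eval z = Complex.exp z := by
    intro z hz
    rw [← spectrum_toLin', ← Module.End.hasEigenvalue_iff_mem_spectrum] at hz
    obtain ⟨v, hv⟩ := hz.exists_hasEigenvector
    have hAv : A *ᵥ v = z • v := by simpa only [toLin'_apply] using hv.apply_eq_smul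
    refine smul_left_injective ℂ hv.2 ?_
    simp only [← aeval_mulVec_of_mulVec_eq_smul hAv, ← exp_mulVec_of_mulVec_eq_smul hAv, hp]
  rw [← hp, spectrum.map_polynomial_aeval, Set.image_congr heval]

end Matrix

theorem stmt13_general (n : ℕ) (A : Matrix (Fin n) (Fin n) ℂ)
    (a : ℝ) (hspec : ∀ μ ∈ spectrum ℂ A, μ.re < -a) :
    ∃ c : ℝ, 0 < c ∧ ∀ t : ℝ, 0 ≤ t →
      ‖NormedSpace.exp ((t : ℂ) • A)‖ ≤ c * Real.exp (-a * t) := by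
  let := Matrix.linftyOpNormedRing (n := Fin n) (α := ℂ)
  let := Matrix.linftyOpNormedAlgebra (n := Fin n) (R := ℂ) (α := ℂ)
  obtain ⟨C, hC⟩ := exists_norm_pow_le_mul_pow_of_forall_norm_lt (Real.exp_pos (-a))
    fun w hw => by
      obtain ⟨z, hz, rfl⟩ := Matrix.spectrum_exp A ▸ hw
      rw [Complex.norm_exp]
      exact Real.exp_lt_exp.2 (hspec z hz)
  exact exists_norm_exp_smul_le_of_norm_exp_pow_le hC

/-- Exponential decay of the matrix exponential: if every eigenvalue `μ` of `A`
satisfies `Re μ < −a` with `a > 0`, then there is `c > 0` such that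
`‖exp(tA)‖ ≤ c e^{−a t}` for all `t ≥ 0`. -/
theorem stmt13 (n : ℕ) (hn : 1 ≤ n) (A : Matrix (Fin n) (Fin n) ℂ)
    (a : ℝ) (ha : 0 < a) (hspec : ∀ μ ∈ spectrum ℂ A, μ.re < -a) :
    ∃ c : ℝ, 0 < c ∧ ∀ t : ℝ, 0 ≤ t →
      ‖NormedSpace.exp ((t : ℂ) • A)‖ ≤ c * Real.exp (-a * t) :=
  stmt13_general n A a hspec
end
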